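/- Let Γ be a rooted tree whose non-root nodes form a laminar-family encoding of components: for 0 ≤ i ≤ k, A_i is the partition of V into connected components of (V, E_{≤i} \ R₂) where E_{≤i} = {e : w_e ≤ w_i}, and Γ has a node v^{A,i} for each A ∈ A_i with children {v^{S,i−1} : S ∈ A_{i−1}, S ⊆ A}. Define R(v^{A,i}) = δ(A) ∩ E_i where E_i = {e : w_e = w_i}, and β_{v^{A,i}} = c(R(v^{A,i})). Then for any downwards-closed set N' of non-root nodes, letting R = ∪_{q∈N'} R(q), we have β(N')/2 ≤ c(R) ≤ β(N'). -/

import Mathlib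

open Finset

/-- The multigraph `(V, F)` determined by the edges in `F ⊆ E` with endpoints `ends`. -/
def mgraph {V E : Type*} (ends : E → Sym2 V) (F : Finset E) : SimpleGraph V where
  Adj u v := u ≠ v ∧ ∃ e ∈ F, ends e = s(u, v)
  symm := ⟨by
    rintro u v ⟨h, e, he, hv⟩
    exact ⟨h.symm, e, he, by rw [hv, Sym2.eq_swap]⟩⟩
  loopless := ⟨fun u h => h.1 rfl⟩

open Classical in
/-- `Elei ends w wval i` is the edge set `E_{≤i} = {e : w e ≤ w_i}` (with `E_{≤0} = ∅`). -/
noncomputable def Elei {V E : Type*} [Fintype E] (ends : E → Sym2 V) (w : E → ℝ)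
    (wval : ℕ → ℝ) (i : ℕ) : Finset E :=
  if i = 0 then ∅ else Finset.univ.filter (fun e => w e ≤ wval i)

/-- `compSets` is the partition `A_i` of `V` into the (vertex sets of) connected
components of `(V, E_{≤i} \ R₂)`. -/
def compSets {V E : Type*} [Fintype E] [DecidableEq E] (ends : E → Sym2 V) (w : E → ℝ)
    (wval : ℕ → ℝ) (R₂ : Finset E) (i : ℕ) : Set (Set V) :=
  {A | ∃ C : (mgraph ends (Elei ends w wval i \ R₂)).ConnectedComponent, A = C.supp}

open Classical in
/-- For a node `q = (A, i)` of the laminar tree, `Redge q = δ(A) ∩ E_i`. -/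
noncomputable def Redge {V E : Type*} [Fintype E] (ends : E → Sym2 V) (w : E → ℝ)
    (wval : ℕ → ℝ) (q : Set V × ℕ) : Finset E :=
  Finset.univ.filter (fun e => w e = wval q.2 ∧
    ∃ u v : V, ends e = s(u, v) ∧ u ∈ q.1 ∧ v ∉ q.1)

/-!
Counting with multiplicity, `β(N') = ∑_{e ∈ R} m(e) c_e`, where `m(e)` is the number of nodes
`q ∈ N'` with `e ∈ R(q)`; so it suffices that `1 ≤ m(e) ≤ 2` on `R`. As the weights
`w_0 < ⋯ < w_k` are distinct, `e ∈ R(A, i)` forces `w_i = w_e`, so all these nodes lie on one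
level `i`; the sets of `A_i` are connected components, so a set `A ∈ A_i` crossed by `e` is the
component of one of the two endpoints of `e`.
-/

namespace Finset

variable {ι α M : Type*} [DecidableEq α] (s : Finset ι) (t : ι → Finset α)

theorem sum_sum_eq_sum_biUnion_card_nsmul [AddCommMonoid M] (f : α → M) :
    ∑ i ∈ s, ∑ a ∈ t i, f a = ∑ a ∈ s.biUnion t, #{i ∈ s | a ∈ t i} • f a := by
  rw [sum_comm' (t' := s.biUnion t) (s' := fun a => {i ∈ s | a ∈ t i})]
  · simp only [sum_const]
  · intro i a
    simp only [mem_filter, mem_biUnion]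
    exact ⟨fun h => ⟨h, i, h⟩, fun h => h.1⟩

variable [AddCommMonoid M] [PartialOrder M] [IsOrderedAddMonoid M] {f : α → M}

theorem sum_biUnion_le_sum_sum (hf : ∀ a, 0 ≤ f a) :
    ∑ a ∈ s.biUnion t, f a ≤ ∑ i ∈ s, ∑ a ∈ t i, f a := by
  rw [sum_sum_eq_sum_biUnion_card_nsmul]
  refine sum_le_sum fun a ha => le_smul_of_one_le_left (hf a) ?_
  obtain ⟨i, hi, hai⟩ := mem_biUnion.mp ha
  exact card_pos.mpr ⟨i, mem_filter.mpr ⟨hi, hai⟩⟩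

theorem sum_sum_le_nsmul_sum_biUnion (hf : ∀ a, 0 ≤ f a) {n : ℕ}
    (hn : ∀ a, #{i ∈ s | a ∈ t i} ≤ n) :
    ∑ i ∈ s, ∑ a ∈ t i, f a ≤ n • ∑ a ∈ s.biUnion t, f a := by
  rw [sum_sum_eq_sum_biUnion_card_nsmul, smul_sum]
  exact sum_le_sum fun a _ => nsmul_le_nsmul_left (hf a) (hn a)

end Finset

section LaminarTree

variable {V E : Type*} [Fintype E] {ends : E → Sym2 V} {w : E → ℝ}
  {wval : ℕ → ℝ}

theorem mem_Redge {q : Set V × ℕ} {e : E} :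
    e ∈ Redge ends w wval q ↔
      w e = wval q.2 ∧ ∃ u v : V, ends e = s(u, v) ∧ u ∈ q.1 ∧ v ∉ q.1 := by
  simp [Redge]

theorem endpoint_mem_of_mem_Redge {q : Set V × ℕ} {e : E} (he : e ∈ Redge ends w wval q)
    {a b : V} (hab : ends e = s(a, b)) : a ∈ q.1 ∨ b ∈ q.1 := by
  obtain ⟨-, u, v, huv, hu, -⟩ := mem_Redge.mp he
  rcases Sym2.eq_iff.mp (huv.symm.trans hab) with ⟨rfl, -⟩ | ⟨rfl, -⟩
  · exact .inl hu
  · exact .inr hu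

theorem level_eq_of_mem_Redge {k : ℕ} (hmono : StrictMonoOn wval (Set.Iic k))
    {q q' : Set V × ℕ} (hq : q.2 ≤ k) (hq' : q'.2 ≤ k) {e : E}
    (he : e ∈ Redge ends w wval q) (he' : e ∈ Redge ends w wval q') : q.2 = q'.2 :=
  hmono.injOn hq hq' ((mem_Redge.mp he).1.symm.trans (mem_Redge.mp he').1)

variable [DecidableEq E]

theorem eq_supp_connectedComponentMk_of_mem_compSets {R₂ : Finset E} {i : ℕ} {A : Set V}
    (hA : A ∈ compSets ends w wval R₂ i) {u : V} (hu : u ∈ A) :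
    A = ((mgraph ends (Elei ends w wval i \ R₂)).connectedComponentMk u).supp := by
  obtain ⟨C, rfl⟩ := hA
  rw [(SimpleGraph.ConnectedComponent.mem_supp_iff _ _).mp hu]

theorem card_filter_mem_Redge_le_two {k : ℕ} (hmono : StrictMonoOn wval (Set.Iic k))
    {R₂ : Finset E} {N : Finset (Set V × ℕ)}
    (hvalid : ∀ q ∈ N, q.2 ≤ k ∧ q.1 ∈ compSets ends w wval R₂ q.2) (e : E) :
    #{q ∈ N | e ∈ Redge ends w wval q} ≤ 2 := by
  rcases (N.filter (e ∈ Redge ends w wval ·)).eq_empty_or_nonempty with hempty | ⟨q₀, hq₀⟩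
  · simp [hempty]
  obtain ⟨⟨a, b⟩, hab⟩ := Quot.exists_rep (ends e)
  replace hab : ends e = s(a, b) := hab.symm
  set G := mgraph ends (Elei ends w wval q₀.2 \ R₂)
  refine (card_le_card fun q hq => ?_).trans
    (card_le_two (a := ((G.connectedComponentMk a).supp, q₀.2))
      (b := ((G.connectedComponentMk b).supp, q₀.2)))
  obtain ⟨hqN, hqe⟩ := mem_filter.mp hq
  obtain ⟨hq₀N, hq₀e⟩ := mem_filter.mp hq₀
  have hlevel : q.2 = q₀.2 :=
    level_eq_of_mem_Redge hmono (hvalid q hqN).1 (hvalid q₀ hq₀N).1 hqe hq₀e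
  have hcomp := (hvalid q hqN).2
  rw [hlevel] at hcomp
  simp only [mem_insert, mem_singleton, Prod.ext_iff, hlevel, and_true]
  exact (endpoint_mem_of_mem_Redge hqe hab).imp
    (eq_supp_connectedComponentMk_of_mem_compSets hcomp)
    (eq_supp_connectedComponentMk_of_mem_compSets hcomp)

end LaminarTree

theorem stmt5_general {V E : Type*} [Fintype E] [DecidableEq E]
    (ends : E → Sym2 V) (w : E → ℝ) (c : E → ℝ) (hc : ∀ e, 0 ≤ c e)
    (k : ℕ) (wval : ℕ → ℝ)
    (hmono : ∀ i j : ℕ, i < j → j ≤ k → wval i < wval j)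
    (R₂ : Finset E)
    (N' : Finset (Set V × ℕ))
    (hvalid : ∀ q ∈ N', q.2 < k ∧ q.1 ∈ compSets ends w wval R₂ q.2)
    (R : Finset E) (hR : R = N'.biUnion (Redge ends w wval)) :
    (∑ q ∈ N', ∑ e ∈ Redge ends w wval q, c e) / 2 ≤ ∑ e ∈ R, c e ∧
      ∑ e ∈ R, c e ≤ ∑ q ∈ N', ∑ e ∈ Redge ends w wval q, c e := by
  subst hR
  have hmult := card_filter_mem_Redge_le_two (fun i _ j hj hij => hmono i j hij hj)
    (fun q hq => ⟨(hvalid q hq).1.le, (hvalid q hq).2⟩)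
  refine ⟨?_, sum_biUnion_le_sum_sum _ _ hc⟩
  rw [div_le_iff₀ two_pos, mul_comm]
  simpa only [nsmul_eq_mul, Nat.cast_ofNat] using sum_sum_le_nsmul_sum_biUnion _ _ hc hmult

/-- Lemma 4.5(i): for any downwards-closed set `N'` of non-root nodes of the laminar
tree built from `R₂`, with `R = ∪_{q ∈ N'} R(q)`, we have `β(N')/2 ≤ c(R) ≤ β(N')`. -/
theorem stmt5 {V E : Type*} [Fintype V] [Fintype E] [DecidableEq E] [DecidableEq V]
    (ends : E → Sym2 V) (w : E → ℝ) (c : E → ℝ) (hc : ∀ e, 0 ≤ c e)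
    (k : ℕ) (wval : ℕ → ℝ) (hw0 : wval 0 = 0)
    (hmono : ∀ i j : ℕ, i < j → j ≤ k → wval i < wval j)
    (R₂ : Finset E)
    (N' : Finset (Set V × ℕ))
    (hvalid : ∀ q ∈ N', q.2 < k ∧ q.1 ∈ compSets ends w wval R₂ q.2)
    (hdown : ∀ q ∈ N', 1 ≤ q.2 → ∀ S ∈ compSets ends w wval R₂ (q.2 - 1),
      S ⊆ q.1 → (S, q.2 - 1) ∈ N')
    (R : Finset E) (hR : R = N'.biUnion (Redge ends w wval)) :
    (∑ q ∈ N', ∑ e ∈ Redge ends w wval q, c e) / 2 ≤ ∑ e ∈ R, c e ∧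
      ∑ e ∈ R, c e ≤ ∑ q ∈ N', ∑ e ∈ Redge ends w wval q, c e :=
  stmt5_general ends w c hc k wval hmono R₂ N' hvalid R hR
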